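/- arXiv:1611.02953 — 4 statements merged into one kernel-verified Lean document; each statement's English description precedes it below -/
import Mathlib

section
/- Let K be a field of characteristic zero, let c ∈ K, and let ε ∈ K satisfy ε = 1 or ε = -1. Let G = Σ_k a_k u^k be a nonzero formal power series in K[[u]] of order m (so a_m ≠ 0 and a_k = 0 for k < m). If exp(-c·u)·G(-u) = ε·exp(c·u)·G(u) as formal power series, then the sub-leading coefficient satisfies a_{m+1} = -c·a_m. -/
open PowerSeries

/-!
Comparing coefficients of `X ^ m` in the functional equation gives `(-1) ^ m * a_m = ε * a_m`,
so `ε = (-1) ^ m`. In degree `m + 1` only the constant and linear terms of `exp (± c X)`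
meet the leading two coefficients of `G`, which leaves
`(-1) ^ m * (-c * a_m - a_{m+1}) = (-1) ^ m * (c * a_m + a_{m+1})`.
-/

namespace PowerSeries

variable {R : Type*} [CommSemiring R]

theorem le_order_rescale (a : R) (φ : R⟦X⟧) : φ.order ≤ (rescale a φ).order :=
  le_order _ _ fun i hi => by simp [coeff_rescale, coeff_of_lt_order i hi]

theorem X_pow_dvd_of_nat_le_order {n : ℕ} {ψ : R⟦X⟧} (h : ↑n ≤ ψ.order) : X ^ n ∣ ψ :=
  X_pow_dvd_iff.mpr fun i hi => coeff_of_lt_order i (lt_of_lt_of_le (by exact_mod_cast hi) h)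

theorem coeff_mul_of_nat_le_order {n : ℕ} (φ : R⟦X⟧) {ψ : R⟦X⟧} (h : ↑n ≤ ψ.order) :
    coeff n (φ * ψ) = coeff 0 φ * coeff n ψ := by
  obtain ⟨ψ, rfl⟩ := X_pow_dvd_of_nat_le_order h
  simp [mul_left_comm φ, coeff_X_pow_mul']

theorem coeff_succ_mul_of_nat_le_order {n : ℕ} (φ : R⟦X⟧) {ψ : R⟦X⟧} (h : ↑n ≤ ψ.order) :
    coeff (n + 1) (φ * ψ) = coeff 0 φ * coeff (n + 1) ψ + coeff 1 φ * coeff n ψ := by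
  obtain ⟨ψ, rfl⟩ := X_pow_dvd_of_nat_le_order h
  rw [add_comm n 1, mul_left_comm, coeff_X_pow_mul, coeff_X_pow_mul, coeff_X_pow_mul',
    if_pos le_rfl, Nat.sub_self, coeff_mul, Finset.Nat.antidiagonal_succ]
  simp

end PowerSeries

theorem subleading_coeff_eq_general
    {K : Type*} [Field K] [CharZero K] (c ε : K)
    (G : PowerSeries K) (m : ℕ) (hm : G.order = (m : ℕ∞))
    (hfe : rescale (-c) (exp K) * rescale (-1) G
         = C ε * (rescale c (exp K) * G)) :
    coeff (m + 1) G = -c * coeff m G := by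
  have ham : coeff m G ≠ 0 := (order_eq_nat.mp hm).1
  have hm' : ↑m ≤ (rescale (-1) G).order := hm ▸ le_order_rescale _ _
  have hlead := congrArg (coeff m) hfe
  have hsublead := congrArg (coeff (m + 1)) hfe
  simp only [coeff_C_mul, coeff_mul_of_nat_le_order _ hm', coeff_mul_of_nat_le_order _ hm.ge,
    coeff_succ_mul_of_nat_le_order _ hm', coeff_succ_mul_of_nat_le_order _ hm.ge, coeff_rescale,
    coeff_exp, pow_zero, pow_one, Nat.factorial_zero, Nat.factorial_one, Nat.cast_one, div_one,
    map_one, one_mul, mul_one] at hlead hsublead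
  obtain rfl : ε = (-1) ^ m := mul_right_cancel₀ ham hlead.symm
  have hcancel : (2 * (-1) ^ m : K) ≠ 0 := by simp
  apply mul_left_cancel₀ hcancel
  linear_combination -hsublead

/-- If `G = Σ aₖ uᵏ ∈ K⟦u⟧` is nonzero of order `m` and satisfies
`exp(-c·u)·G(-u) = ε·exp(c·u)·G(u)` with `ε = ±1`, then `a_{m+1} = -c·a_m`. -/
theorem subleading_coeff_eq
    {K : Type*} [Field K] [CharZero K] (c ε : K) (hε : ε = 1 ∨ ε = -1)
    (G : PowerSeries K) (hG : G ≠ 0) (m : ℕ) (hm : G.order = (m : ℕ∞))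
    (hfe : rescale (-c) (exp K) * rescale (-1) G
         = C ε * (rescale c (exp K) * G)) :
    coeff (m + 1) G = -c * coeff m G :=
  subleading_coeff_eq_general c ε G m hm hfe
end

section
/- Let K be a field of characteristic zero, let c ∈ K, and let ε ∈ K satisfy ε = 1 or ε = -1. Let G = Σ_k a_k u^k be a nonzero formal power series in K[[u]] of order m. Suppose exp(-c·u)·G(-u) = ε·exp(c·u)·G(u) as formal power series. Then for every odd positive integer k, a_{m+k} = -Σ_{i=0}^{k-1} (c^{k-i}/(k-i)!)·a_{m+i}. In particular, for odd k the coefficient a_{m+k} is a K-linear combination of the coefficients a_{m+ℓ} with ℓ even, 0 ≤ ℓ < k. -/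
open PowerSeries Finset

/-! With `F = exp(c·u)·G` the functional equation reads `F(-u) = ε·F(u)`. Since `F` and `G` share
the leading coefficient `a_m`, this forces `ε = (-1)^m`, so the coefficients of `u^(m+k)` in `F`
vanish for odd `k`; expanding the product `exp(c·u)·G` turns this into the recursion for
`a_(m+k)`. Strong induction on `k` then writes every `a_(m+k)` through the `a_(m+ℓ)`, `ℓ` even. -/

namespace Submodule

variable {R M : Type*} [Semiring R] [AddCommMonoid M] [Module R M]

theorem mem_span_image_even_of_forall_odd {a : ℕ → M}
    (ha : ∀ n, Odd n → a n ∈ span R (a '' Set.Iio n)) (n : ℕ) :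
    a n ∈ span R (a '' {ℓ | ℓ ≤ n ∧ Even ℓ}) := by
  induction n using Nat.strong_induction_on with
  | _ n ih =>
    rcases Nat.even_or_odd n with hn | hn
    · exact subset_span ⟨n, ⟨le_rfl, hn⟩, rfl⟩
    · refine span_le.mpr ?_ (ha n hn)
      rintro _ ⟨i, hi, rfl⟩
      have hsub : {ℓ | ℓ ≤ i ∧ Even ℓ} ⊆ {ℓ | ℓ ≤ n ∧ Even ℓ} :=
        fun ℓ hℓ => ⟨hℓ.1.trans hi.le, hℓ.2⟩
      exact span_mono (Set.image_mono hsub) (ih i hi)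

theorem exists_sum_even_of_forall_odd {a : ℕ → M}
    (ha : ∀ n, Odd n → a n ∈ span R (a '' Set.Iio n)) {k : ℕ} (hk : Odd k) :
    ∃ w : ℕ → R, a k = ∑ ℓ ∈ (range k).filter Even, w ℓ • a ℓ := by
  have hset : {ℓ | ℓ ≤ k ∧ Even ℓ} = ↑((range k).filter Even) := by
    ext ℓ
    simp only [Set.mem_ofPred_eq, coe_filter, mem_range]
    refine ⟨fun ⟨hℓ, he⟩ => ⟨hℓ.lt_of_ne ?_, he⟩, fun ⟨hℓ, he⟩ => ⟨hℓ.le, he⟩⟩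
    rintro rfl
    exact Nat.not_even_iff_odd.mpr hk he
  have hspan := mem_span_image_even_of_forall_odd ha k
  rw [hset, mem_span_image_finset_iff_exists_fun'] at hspan
  obtain ⟨w, hw⟩ := hspan
  exact ⟨w, hw.symm⟩

end Submodule

namespace PowerSeries

variable {R : Type*}

theorem coeff_add_mul_eq_sum_of_forall_lt [CommSemiring R] {f g : R⟦X⟧} {m : ℕ}
    (hg : ∀ i < m, coeff i g = 0) (k : ℕ) :
    coeff (m + k) (f * g) = ∑ i ∈ range (k + 1), coeff (k - i) f * coeff (m + i) g := by
  obtain ⟨h, rfl⟩ := X_pow_dvd_iff.mpr hg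
  rw [mul_left_comm, add_comm, coeff_X_pow_mul, mul_comm, coeff_mul,
    Nat.sum_antidiagonal_eq_sum_range_succ (fun i j => coeff i h * coeff j f)]
  refine sum_congr rfl fun i _ => ?_
  rw [mul_comm, add_comm, coeff_X_pow_mul]

theorem coeff_rescale_exp [Field R] [CharZero R] (c : R) (n : ℕ) :
    coeff n (rescale c (exp R)) = c ^ n / n.factorial := by
  simp [coeff_rescale, coeff_exp, div_eq_mul_inv, mul_comm]

theorem coeff_add_odd_eq_zero_of_rescale_neg_one_eq [CommRing R] [IsDomain R] [CharZero R]
    {F : R⟦X⟧} {ε : R} (hF : rescale (-1) F = C ε * F) {m : ℕ} (hm : coeff m F ≠ 0)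
    {k : ℕ} (hk : Odd k) : coeff (m + k) F = 0 := by
  have hcoeff (n : ℕ) : (-1) ^ n * coeff n F = ε * coeff n F := by
    simpa [coeff_rescale] using congrArg (coeff n) hF
  have hε : ε = (-1) ^ m := (mul_right_cancel₀ hm (hcoeff m)).symm
  have h := hcoeff (m + k)
  rw [hε, pow_add, hk.neg_one_pow, mul_assoc, neg_one_mul] at h
  exact neg_eq_self.mp (mul_left_cancel₀ (pow_ne_zero _ (neg_ne_zero.mpr one_ne_zero)) h)

theorem coeff_add_odd_eq_neg_sum {K : Type*} [Field K] [CharZero K] {c ε : K}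
    {G : K⟦X⟧} {m : ℕ} (hm : G.order = m)
    (hfe : rescale (-c) (exp K) * rescale (-1) G = C ε * (rescale c (exp K) * G))
    {k : ℕ} (hk : Odd k) :
    coeff (m + k) G = -∑ i ∈ range k, c ^ (k - i) / (k - i).factorial * coeff (m + i) G := by
  obtain ⟨hGm, hG_lt⟩ := order_eq_nat.mp hm
  have hF : rescale (-1) (rescale c (exp K) * G) = C ε * (rescale c (exp K) * G) := by
    rwa [map_mul, rescale_rescale, mul_neg_one]
  have hFcoeff (j : ℕ) := coeff_add_mul_eq_sum_of_forall_lt (f := rescale c (exp K)) hG_lt j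
  have hFm : coeff m (rescale c (exp K) * G) ≠ 0 := by
    rw [← add_zero m, hFcoeff]
    simpa [coeff_rescale_exp] using hGm
  have h := coeff_add_odd_eq_zero_of_rescale_neg_one_eq hF hFm hk
  rw [hFcoeff, sum_range_succ] at h
  simp only [coeff_rescale_exp, Nat.sub_self, pow_zero, Nat.factorial_zero, Nat.cast_one,
    div_one, one_mul] at h
  exact eq_neg_of_add_eq_zero_right h

end PowerSeries

theorem odd_coeff_formula_general
    {K : Type*} [Field K] [CharZero K] (c ε : K)
    (G : PowerSeries K) (m : ℕ) (hm : G.order = (m : ℕ∞))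
    (hfe : rescale (-c) (exp K) * rescale (-1) G
         = C ε * (rescale c (exp K) * G)) :
    ∀ k : ℕ, Odd k → 0 < k →
      (coeff (m + k) G
        = -∑ i ∈ range k, c ^ (k - i) / (k - i).factorial * coeff (m + i) G)
      ∧ ∃ w : ℕ → K,
          coeff (m + k) G = ∑ ℓ ∈ (range k).filter (fun ℓ => Even ℓ),
            w ℓ * coeff (m + ℓ) G := by
  have hodd (n : ℕ) (hn : Odd n) := coeff_add_odd_eq_neg_sum hm hfe hn
  have hspan (n : ℕ) (hn : Odd n) :
      coeff (m + n) G ∈ Submodule.span K ((fun ℓ => coeff (m + ℓ) G) '' Set.Iio n) := by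
    rw [hodd n hn]
    exact Submodule.neg_mem _ <| Submodule.sum_mem _ fun i hi =>
      Submodule.smul_mem _ _ (Submodule.subset_span ⟨i, mem_range.mp hi, rfl⟩)
  intro k hk _
  exact ⟨hodd k hk, Submodule.exists_sum_even_of_forall_odd hspan hk⟩

/-- If `G = Σ aₖ uᵏ ∈ K⟦u⟧` is nonzero of order `m` and satisfies
`exp(-c·u)·G(-u) = ε·exp(c·u)·G(u)` with `ε = ±1`, then for every odd `k > 0`,
`a_{m+k} = -Σ_{i=0}^{k-1} (c^{k-i}/(k-i)!)·a_{m+i}`; in particular `a_{m+k}` is a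
`K`-linear combination of the `a_{m+ℓ}` with `ℓ` even, `0 ≤ ℓ < k`. -/
theorem odd_coeff_formula
    {K : Type*} [Field K] [CharZero K] (c ε : K) (hε : ε = 1 ∨ ε = -1)
    (G : PowerSeries K) (hG : G ≠ 0) (m : ℕ) (hm : G.order = (m : ℕ∞))
    (hfe : rescale (-c) (exp K) * rescale (-1) G
         = C ε * (rescale c (exp K) * G)) :
    ∀ k : ℕ, Odd k → 0 < k →
      (coeff (m + k) G
        = -∑ i ∈ range k, c ^ (k - i) / (k - i).factorial * coeff (m + i) G)
      ∧ ∃ w : ℕ → K,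
          coeff (m + k) G = ∑ ℓ ∈ (range k).filter (fun ℓ => Even ℓ),
            w ℓ * coeff (m + ℓ) G :=
  odd_coeff_formula_general c ε G m hm hfe
end

section
/- Let K be a field of characteristic zero, let q ∈ K, and let ε ∈ K satisfy ε = 1 or ε = -1. Let σ denote the formal power series σ(T) = Σ_{k≥1} (-1)^k T^k in K[[T]]. Let F = Σ_k c_k T^k be a nonzero formal power series in K[[T]] of order m. If F∘σ = ε·exp(q·log(1+T))·F as formal power series, then the sub-leading coefficient satisfies c_{m+1} = -(c_m/2)·(q + m). -/
/-!
Compare the coefficients of `T^m` and `T^(m+1)` on both sides. Since `σ = -T(1 - T + T² - ⋯)`,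
`σ^j = (-1)^j T^j (1 - jT + ⋯)`, and `(1+T)^q = 1 + qT + ⋯`. The `T^m` coefficient gives
`(-1)^m c_m = ε c_m`, so `ε = (-1)^m`; the `T^(m+1)` coefficient then reads
`-(c_{m+1} + m c_m) = c_{m+1} + q c_m`.
-/

open PowerSeries Finset

/-- `σ(T) = Σ_{k≥1} (-1)^k T^k = (1+T)⁻¹ - 1`. -/
noncomputable def sigma (K : Type*) [Ring K] : PowerSeries K :=
  PowerSeries.mk fun k => if k = 0 then 0 else (-1) ^ k

/-- Substitution `f ∘ g` of a power series `g` with zero constant term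
into a power series `f`: the `n`-th coefficient is `Σ_{j≤n} fⱼ · coeff n (g^j)`. -/
noncomputable def PowerSeries.comp {K : Type*} [CommSemiring K]
    (f g : PowerSeries K) : PowerSeries K :=
  PowerSeries.mk fun n => ∑ j ∈ range (n + 1), coeff j f * coeff n (g ^ j)

/-- `log(1+T) = Σ_{k≥1} (-1)^{k+1} T^k / k`. -/
noncomputable def logOneAdd (K : Type*) [Field K] [CharZero K] : PowerSeries K :=
  PowerSeries.mk fun k => if k = 0 then 0 else (-1) ^ (k + 1) / (k : K)

/-- `exp(q·log(1+T)) = Σ_{n≥0} qⁿ·log(1+T)ⁿ/n!`, the formal binomial series `(1+T)^q`. -/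
noncomputable def onePlusTPow {K : Type*} [Field K] [CharZero K] (q : K) :
    PowerSeries K :=
  (PowerSeries.exp K).comp (C q * logOneAdd K)

section Sigma

variable {K : Type*} [CommRing K]

lemma sigma_eq_X_mul : sigma K = X * PowerSeries.mk fun k => (-1) ^ (k + 1) := by
  ext (_ | n)
  · simp [sigma]
  · simp [sigma, coeff_succ_X_mul]

lemma coeff_self_sigma_pow (j : ℕ) : coeff j (sigma K ^ j) = (-1) ^ j := by
  rw [sigma_eq_X_mul, mul_pow, coeff_X_pow_mul', if_pos le_rfl, Nat.sub_self,
    coeff_zero_eq_constantCoeff, map_pow, constantCoeff_mk, zero_add, pow_one]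

lemma coeff_succ_sigma_pow (j : ℕ) :
    coeff (j + 1) (sigma K ^ j) = (-1) ^ (j + 1) * j := by
  rw [sigma_eq_X_mul, mul_pow, coeff_X_pow_mul', if_pos j.le_succ, Nat.add_sub_cancel_left,
    coeff_one_pow]
  rcases j with _ | j
  · simp
  · simp [pow_succ, mul_comm]

end Sigma

section Order

variable {K : Type*} [CommSemiring K] {F : PowerSeries K} {m : ℕ}

lemma coeff_comp_of_forall_lt (g : PowerSeries K) (hF : ∀ i < m, coeff i F = 0) :
    coeff m (F.comp g) = coeff m F * coeff m (g ^ m) ∧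
      coeff (m + 1) (F.comp g) =
        coeff m F * coeff (m + 1) (g ^ m) + coeff (m + 1) F * coeff (m + 1) (g ^ (m + 1)) := by
  have low (n : ℕ) : ∑ j ∈ range m, coeff j F * coeff n (g ^ j) = 0 :=
    sum_eq_zero fun j hj => by rw [hF j (mem_range.mp hj), zero_mul]
  simp only [PowerSeries.comp, coeff_mk, sum_range_succ, low, zero_add, and_self]

lemma coeff_mul_of_forall_lt (P : PowerSeries K) (hF : ∀ i < m, coeff i F = 0) :
    coeff m (P * F) = coeff 0 P * coeff m F ∧
      coeff (m + 1) (P * F) = coeff 0 P * coeff (m + 1) F + coeff 1 P * coeff m F := by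
  obtain ⟨G, rfl⟩ := X_pow_dvd_iff.mpr hF
  simp [mul_left_comm P, coeff_mul, Nat.sum_antidiagonal_eq_sum_range_succ_mk,
    sum_range_succ]

end Order

section OnePlusTPow

variable {K : Type*} [Field K] [CharZero K]

lemma coeff_zero_onePlusTPow (q : K) : coeff 0 (onePlusTPow q) = 1 := by
  simp [onePlusTPow, PowerSeries.comp, coeff_exp]

lemma coeff_one_onePlusTPow (q : K) : coeff 1 (onePlusTPow q) = q := by
  simp [onePlusTPow, PowerSeries.comp, sum_range_succ, coeff_exp, logOneAdd]

end OnePlusTPow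

theorem subleading_coeff_eq_T_general
    {K : Type*} [Field K] [CharZero K] (q ε : K)
    (F : PowerSeries K) (m : ℕ) (hm : F.order = (m : ℕ∞))
    (hfe : F.comp (sigma K) = C ε * (onePlusTPow q * F)) :
    coeff (m + 1) F = -(coeff m F / 2) * (q + m) := by
  obtain ⟨hcm, hlow⟩ := order_eq_nat.mp hm
  obtain ⟨comp_m, comp_succ⟩ := coeff_comp_of_forall_lt (sigma K) hlow
  obtain ⟨mul_m, mul_succ⟩ := coeff_mul_of_forall_lt (onePlusTPow q) hlow
  have h_m := congrArg (coeff m) hfe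
  have h_succ := congrArg (coeff (m + 1)) hfe
  rw [comp_m, coeff_self_sigma_pow, coeff_C_mul, mul_m, coeff_zero_onePlusTPow] at h_m
  rw [comp_succ, coeff_succ_sigma_pow, coeff_self_sigma_pow, coeff_C_mul, mul_succ,
    coeff_zero_onePlusTPow, coeff_one_onePlusTPow] at h_succ
  have hε : ε = (-1) ^ m := mul_left_cancel₀ hcm (by linear_combination -h_m)
  have hsq : ((-1 : K) ^ m) ^ 2 = 1 := by rw [← pow_mul, mul_comm, pow_mul]; simp
  subst hε
  linear_combination (-(-1 : K) ^ m / 2) * h_succ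
    - (m * coeff m F + 2 * coeff (m + 1) F + q * coeff m F) / 2 * hsq

/-- If `F = Σ cₖ Tᵏ ∈ K⟦T⟧` is nonzero of order `m` and satisfies
`F∘σ = ε·exp(q·log(1+T))·F` with `ε = ±1`, then `c_{m+1} = -(c_m/2)·(q + m)`. -/
theorem subleading_coeff_eq_T
    {K : Type*} [Field K] [CharZero K] (q ε : K) (hε : ε = 1 ∨ ε = -1)
    (F : PowerSeries K) (hF : F ≠ 0) (m : ℕ) (hm : F.order = (m : ℕ∞))
    (hfe : F.comp (sigma K) = C ε * (onePlusTPow q * F)) :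
    coeff (m + 1) F = -(coeff m F / 2) * (q + m) :=
  subleading_coeff_eq_T_general q ε F m hm hfe
end

section
/- Let p be a prime, let f = Σ_j a_j T^j ∈ ℤ_p[[T]], and define b_k = (-1)^k·Σ_{i=0}^{k-1} binomial(k-1, i)·a_{i+1} for k ≥ 1 (the coefficients of f∘σ, where σ(T) = Σ_{k≥1}(-1)^k T^k). Let k ≥ 1 and let n be a natural number such that p^n divides a_k, p^{n+1} does not divide a_k, and p^{n+1} divides a_j for every j with 1 ≤ j < k. Then p^n divides b_k and p^{n+1} does not divide b_k; that is, the p-adic valuation of b_k equals the p-adic valuation of a_k. -/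
/-! Up to the unit `(-1)^k`, `b_k` is `a_k` plus a `ℤ_p`-combination of `a_1, …, a_{k-1}`, all of
which are divisible by `p^{n+1}`; such a perturbation changes neither `p^n ∣ ·` nor `p^{n+1} ∣ ·`. -/

open PowerSeries Finset

theorem dvd_unit_mul_add_iff {R : Type*} [CommRing R] {c u x y : R} (hu : IsUnit u)
    (hy : c ∣ y) : c ∣ u * (y + x) ↔ c ∣ x := by
  rw [hu.dvd_mul_left, dvd_add_right hy]

namespace PadicInt

variable {p : ℕ} [Fact p.Prime]

theorem pow_dvd_iff_le_valuation {x : ℤ_[p]} (hx : x ≠ 0) (n : ℕ) :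
    (p : ℤ_[p]) ^ n ∣ x ↔ n ≤ x.valuation := by
  rw [← Ideal.mem_span_singleton, mem_span_pow_iff_le_valuation x hx]

theorem valuation_eq_of_pow_dvd_of_not_pow_succ_dvd {x : ℤ_[p]} {n : ℕ}
    (h1 : (p : ℤ_[p]) ^ n ∣ x) (h2 : ¬ (p : ℤ_[p]) ^ (n + 1) ∣ x) : x.valuation = n := by
  have hx : x ≠ 0 := by
    rintro rfl
    exact h2 (dvd_zero _)
  rw [pow_dvd_iff_le_valuation hx] at h1 h2
  omega

end PadicInt

theorem padic_valuation_eq_comp_sigma_general (p : ℕ) [Fact p.Prime]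
    (a b : ℕ → ℤ_[p])
    (hbk : ∀ k, 1 ≤ k →
      b k = (-1) ^ k * ∑ i ∈ range k, ((k - 1).choose i : ℤ_[p]) * a (i + 1))
    (k n : ℕ) (hk : 1 ≤ k)
    (h1 : (p : ℤ_[p]) ^ n ∣ a k)
    (h2 : ¬ (p : ℤ_[p]) ^ (n + 1) ∣ a k)
    (h3 : ∀ j, 1 ≤ j → j < k → (p : ℤ_[p]) ^ (n + 1) ∣ a j) :
    ((p : ℤ_[p]) ^ n ∣ b k ∧ ¬ (p : ℤ_[p]) ^ (n + 1) ∣ b k) ∧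
    (b k).valuation = (a k).valuation := by
  obtain ⟨m, rfl⟩ : ∃ m, k = m + 1 := ⟨k - 1, by omega⟩
  have hlower : (p : ℤ_[p]) ^ (n + 1) ∣ ∑ i ∈ range m, (m.choose i : ℤ_[p]) * a (i + 1) :=
    dvd_sum fun i hi => (h3 (i + 1) le_add_self (by simpa using hi)).mul_left _
  have hb : b (m + 1) =
      (-1) ^ (m + 1) * (∑ i ∈ range m, (m.choose i : ℤ_[p]) * a (i + 1) + a (m + 1)) := by
    rw [hbk _ hk, sum_range_succ, Nat.add_sub_cancel, Nat.choose_self, Nat.cast_one, one_mul]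
  have hunit : IsUnit ((-1 : ℤ_[p]) ^ (m + 1)) := isUnit_neg_one.pow _
  have hd1 : (p : ℤ_[p]) ^ n ∣ b (m + 1) := by
    rwa [hb, dvd_unit_mul_add_iff hunit ((pow_dvd_pow _ n.le_succ).trans hlower)]
  have hd2 : ¬ (p : ℤ_[p]) ^ (n + 1) ∣ b (m + 1) := by
    rwa [hb, dvd_unit_mul_add_iff hunit hlower]
  refine ⟨⟨hd1, hd2⟩, ?_⟩
  rw [PadicInt.valuation_eq_of_pow_dvd_of_not_pow_succ_dvd hd1 hd2,
    PadicInt.valuation_eq_of_pow_dvd_of_not_pow_succ_dvd h1 h2]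

/-- let `a : ℕ → ℤ_p` be the coefficients of `f ∈ ℤ_p⟦T⟧` and let
`bₖ = (-1)^k·Σ_{i=0}^{k-1} C(k-1, i)·a_{i+1}` for `k ≥ 1` (the coefficients of `f∘σ`).
If `k ≥ 1`, `p^n ∣ aₖ`, `p^{n+1} ∤ aₖ` and `p^{n+1} ∣ aⱼ` for all `1 ≤ j < k`, then
`p^n ∣ bₖ` and `p^{n+1} ∤ bₖ`, i.e. `νₚ(bₖ) = νₚ(aₖ)`. -/
theorem padic_valuation_eq_comp_sigma (p : ℕ) [Fact p.Prime]
    (f : PowerSeries ℤ_[p]) (a b : ℕ → ℤ_[p])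
    (ha : ∀ j, a j = coeff j f)
    (hbk : ∀ k, 1 ≤ k →
      b k = (-1) ^ k * ∑ i ∈ range k, ((k - 1).choose i : ℤ_[p]) * a (i + 1))
    (k n : ℕ) (hk : 1 ≤ k)
    (h1 : (p : ℤ_[p]) ^ n ∣ a k)
    (h2 : ¬ (p : ℤ_[p]) ^ (n + 1) ∣ a k)
    (h3 : ∀ j, 1 ≤ j → j < k → (p : ℤ_[p]) ^ (n + 1) ∣ a j) :
    ((p : ℤ_[p]) ^ n ∣ b k ∧ ¬ (p : ℤ_[p]) ^ (n + 1) ∣ b k) ∧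
    (b k).valuation = (a k).valuation :=
  padic_valuation_eq_comp_sigma_general p a b hbk k n hk h1 h2 h3
end
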